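/- arXiv:2212.02376 — 2 statements merged into one kernel-verified Lean document; each statement's English description precedes it below -/
import Mathlib

section
/- The map x ↦ ∇̄f(x, y*(x)), which equals the gradient ∇l of l(x) := f(x, y*(x)), is Lipschitz continuous with constant L_l := L_f + L_f C_{gxy}/μ_g, where L_f := L_{fx} + L_{fy} C_{gxy}/μ_g + C_{fy}(L_{gxy}/μ_g + L_{gyy} C_{gxy}/μ_g²); that is, ‖∇̄f(x₁, y*(x₁)) − ∇̄f(x₂, y*(x₂))‖ ≤ L_l ‖x₁ − x₂‖ for all x₁, x₂ ∈ E. -/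
open scoped RealInnerProductSpace

noncomputable section

variable {E F : Type*} [NormedAddCommGroup E] [InnerProductSpace ℝ E] [FiniteDimensional ℝ E]
  [NormedAddCommGroup F] [InnerProductSpace ℝ F] [FiniteDimensional ℝ F]

/-- Gradient of `f(·, y)` at `x`. -/
def gradx (f : E × F → ℝ) (x : E) (y : F) : E := gradient (fun x' => f (x', y)) x

/-- Gradient of `f(x, ·)` at `y`. -/
def grady (f : E × F → ℝ) (x : E) (y : F) : F := gradient (fun y' => f (x, y')) y

/-- Hessian of `g(x, ·)` at `y`, as a continuous linear map `F →L[ℝ] F`. -/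
def hessyy (g : E × F → ℝ) (x : E) (y : F) : F →L[ℝ] F :=
  fderiv ℝ (fun y' => grady g x y') y

/-- Mixed second derivative `∇²_{xy} g(x,y) : F →L[ℝ] E`, the adjoint of the derivative at `x`
of the map `x ↦ ∇_y g(x,y)`. -/
def hessxy (g : E × F → ℝ) (x : E) (y : F) : F →L[ℝ] E :=
  ContinuousLinearMap.adjoint (fderiv ℝ (fun x' => grady g x' y) x)

/-- The surrogate (hyper)gradient
`∇̄f(x,y) = ∇_x f(x,y) − ∇²_{xy} g(x,y) ([∇²_{yy} g(x,y)]⁻¹ (∇_y f(x,y)))`. -/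
def barGrad (f g : E × F → ℝ) (x : E) (y : F) : E :=
  gradx f x y - hessxy g x y (Ring.inverse (hessyy g x y) (grady f x y))

/-!
Strong convexity makes `∇_y g(x, ·)` `μ_g`-strongly monotone, so the Hessian `∇²_{yy} g` is
coercive: it is invertible with `‖[∇²_{yy} g]⁻¹‖ ≤ 1/μ_g`. Comparing the optimality conditions
`∇_y g(x, y*(x)) = 0` at two points through strong monotonicity and the mean value bound
`‖∂_x ∇_y g‖ ≤ C_{gxy}` shows that `y*` is `C_{gxy}/μ_g`-Lipschitz. The resolvent identity
`A⁻¹ - B⁻¹ = A⁻¹ (B - A) B⁻¹` splits the difference of two values of `∇̄f` into four terms, each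
controlled by one Lipschitz constant, so `∇̄f` is `L_f`-Lipschitz jointly in `(x, y)`; composing
with the `(1 + C_{gxy}/μ_g)`-Lipschitz map `x ↦ (x, y*(x))` gives `L_l`.
-/

open InnerProductSpace Set Filter Topology

section Convexity

variable {V : Type*} [NormedAddCommGroup V] [InnerProductSpace ℝ V]

theorem StrongConvexOn.inner_gradient_sub_gradient_ge [CompleteSpace V] {m : ℝ}
    {φ : V → ℝ} {φ' : V → V} (hφ : StrongConvexOn univ m φ)
    (hφ' : ∀ y, HasGradientAt φ (φ' y) y) (y z : V) :
    m * ‖z - y‖ ^ 2 ≤ ⟪φ' z - φ' y, z - y⟫ := by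
  set ℓ := AffineMap.lineMap (k := ℝ) y z
  have hconv : ConvexOn ℝ univ fun t => φ (ℓ t) - m / 2 * ‖ℓ t‖ ^ 2 :=
    (strongConvexOn_iff_convex.mp hφ).comp_affineMap ℓ
  have hderiv (t : ℝ) : HasDerivAt (fun t => φ (ℓ t) - m / 2 * ‖ℓ t‖ ^ 2)
      (⟪φ' (ℓ t), z - y⟫ - m * ⟪ℓ t, z - y⟫) t := by
    have hℓ : HasDerivAt ℓ (z - y) t := AffineMap.hasDerivAt_lineMap
    have hφℓ : HasDerivAt (fun t => φ (ℓ t)) ⟪φ' (ℓ t), z - y⟫ t :=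
      ((hφ' (ℓ t)).hasFDerivAt.comp_hasDerivAt t hℓ).congr_deriv (toDual_apply_apply ..)
    have hsq : HasDerivAt (fun t => m / 2 * ‖ℓ t‖ ^ 2) (m / 2 * (2 * ⟪ℓ t, z - y⟫)) t :=
      hℓ.norm_sq.const_mul _
    exact (hφℓ.sub hsq).congr_deriv (by ring)
  have h := (hconv.le_slope_of_hasDerivAt (mem_univ 0) (mem_univ 1) zero_lt_one (hderiv 0)).trans
    (hconv.slope_le_of_hasDerivAt (mem_univ 0) (mem_univ 1) zero_lt_one (hderiv 1))
  simp only [ℓ, AffineMap.lineMap_apply_zero, AffineMap.lineMap_apply_one] at h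
  rw [inner_sub_left, ← real_inner_self_eq_norm_sq, inner_sub_left]
  linarith

theorem mul_norm_le_of_mul_sq_le_inner {m : ℝ} {u w : V} (h : m * ‖u‖ ^ 2 ≤ ⟪w, u⟫) :
    m * ‖u‖ ≤ ‖w‖ := by
  rcases (norm_nonneg u).eq_or_lt with hu | hu
  · rw [← hu, mul_zero]; exact norm_nonneg w
  · have := h.trans (real_inner_le_norm w u)
    nlinarith

theorem HasFDerivAt.mul_sq_le_inner_apply {m : ℝ} {G : V → V} {G' : V →L[ℝ] V} {y : V}
    (hG : HasFDerivAt G G' y) (hmono : ∀ z, m * ‖z - y‖ ^ 2 ≤ ⟪G z - G y, z - y⟫) (v : V) :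
    m * ‖v‖ ^ 2 ≤ ⟪G' v, v⟫ := by
  have hρ : HasDerivAt (fun t : ℝ => ⟪G (y + t • v), v⟫) ⟪G' v, v⟫ 0 := by
    have hline : HasDerivAt (fun t : ℝ => y + t • v) v 0 := by
      simpa using ((hasDerivAt_id (0 : ℝ)).smul_const v).const_add y
    have := (hG.comp_hasDerivAt_of_eq 0 hline (by simp)).inner ℝ (hasDerivAt_const 0 v)
    simpa using this
  refine ge_of_tendsto (x := 𝓝[>] (0 : ℝ)) ((hasDerivAt_iff_tendsto_slope.mp hρ).mono_left
    (nhdsWithin_mono 0 fun t ht => ne_of_gt ht)) ?_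
  filter_upwards [self_mem_nhdsWithin] with t (ht : 0 < t)
  have hm := hmono (y + t • v)
  rw [add_sub_cancel_left, norm_smul, Real.norm_of_nonneg ht.le, real_inner_smul_right] at hm
  rw [slope_def_field, sub_zero, zero_smul, add_zero, le_div_iff₀ ht, ← inner_sub_left]
  nlinarith

theorem IsLocalMin.gradient_eq_zero [CompleteSpace V] {φ : V → ℝ} {y : V} (h : IsLocalMin φ y) :
    gradient φ y = 0 := by
  rw [gradient, h.fderiv_eq_zero, map_zero]

end Convexity

section Operators

variable {V W : Type*} [NormedAddCommGroup V] [NormedSpace ℝ V]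
  [NormedAddCommGroup W] [NormedSpace ℝ W]

theorem ContinuousLinearMap.isUnit_of_mul_norm_le [FiniteDimensional ℝ V] {T : V →L[ℝ] V}
    {m : ℝ} (hm : 0 < m) (hT : ∀ v, m * ‖v‖ ≤ ‖T v‖) : IsUnit T := by
  have hinj : Function.Injective T := by
    refine (injective_iff_map_eq_zero T).mpr fun v hv => norm_le_zero_iff.mp ?_
    have := hT v
    rw [hv, norm_zero] at this
    nlinarith [norm_nonneg v]
  exact ContinuousLinearMap.isUnit_iff_bijective.mpr
    ⟨hinj, LinearMap.injective_iff_surjective (f := (T : V →ₗ[ℝ] V)).mp hinj⟩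

theorem ContinuousLinearMap.norm_inverse_le_of_mul_norm_le {T : V →L[ℝ] V} (hT : IsUnit T)
    {m : ℝ} (hm : 0 < m) (hlow : ∀ v, m * ‖v‖ ≤ ‖T v‖) : ‖Ring.inverse T‖ ≤ m⁻¹ := by
  refine ContinuousLinearMap.opNorm_le_bound _ (by positivity) fun w => ?_
  have h := hlow (Ring.inverse T w)
  rw [← mul_apply_eq_comp, Ring.mul_inverse_cancel T hT, one_apply_eq_self] at h
  rw [inv_mul_eq_div, le_div_iff₀ hm]
  linarith

theorem norm_sub_apply_inverse_sub_sub_apply_inverse_le {a₁ a₂ : W} {A₁ A₂ : V →L[ℝ] W}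
    {T₁ T₂ : V →L[ℝ] V} {v₁ v₂ : V} {κ B C : ℝ} (hT₁ : IsUnit T₁) (hT₂ : IsUnit T₂)
    (hκ₁ : ‖Ring.inverse T₁‖ ≤ κ) (hκ₂ : ‖Ring.inverse T₂‖ ≤ κ) (hA₂ : ‖A₂‖ ≤ C)
    (hv₁ : ‖v₁‖ ≤ B) :
    ‖(a₁ - A₁ (Ring.inverse T₁ v₁)) - (a₂ - A₂ (Ring.inverse T₂ v₂))‖ ≤
      ‖a₁ - a₂‖ + κ * B * ‖A₁ - A₂‖ + C * κ ^ 2 * B * ‖T₁ - T₂‖ + C * κ * ‖v₁ - v₂‖ := by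
  set I₁ := Ring.inverse T₁
  set I₂ := Ring.inverse T₂
  have hκ : 0 ≤ κ := (norm_nonneg _).trans hκ₁
  have hsplit : (a₁ - A₁ (I₁ v₁)) - (a₂ - A₂ (I₂ v₂)) =
      (a₁ - a₂) - ((A₁ - A₂) (I₁ v₁) + A₂ ((I₁ - I₂) v₁) + A₂ (I₂ (v₁ - v₂))) := by
    simp only [sub_apply, map_sub]
    abel
  have hI : ‖I₁ - I₂‖ ≤ κ ^ 2 * ‖T₁ - T₂‖ := by
    rw [Ring.inverse_sub_inverse (iff_of_true hT₁ hT₂), ← norm_neg (T₁ - T₂), neg_sub]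
    calc ‖I₁ * (T₂ - T₁) * I₂‖ ≤ ‖I₁‖ * ‖T₂ - T₁‖ * ‖I₂‖ := norm_mul₃_le
      _ ≤ κ * ‖T₂ - T₁‖ * κ := by gcongr
      _ = κ ^ 2 * ‖T₂ - T₁‖ := by ring
  calc ‖(a₁ - A₁ (I₁ v₁)) - (a₂ - A₂ (I₂ v₂))‖
      ≤ ‖a₁ - a₂‖ + (‖(A₁ - A₂) (I₁ v₁)‖ + ‖A₂ ((I₁ - I₂) v₁)‖ + ‖A₂ (I₂ (v₁ - v₂))‖) := by
        rw [hsplit]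
        exact (norm_sub_le _ _).trans (add_le_add_right norm_add₃_le _)
    _ ≤ ‖a₁ - a₂‖ + (‖A₁ - A₂‖ * (κ * B) + C * (κ ^ 2 * ‖T₁ - T₂‖ * B) +
          C * (κ * ‖v₁ - v₂‖)) := by
        gcongr
        · exact (A₁ - A₂).le_of_opNorm_le_of_le le_rfl (I₁.le_of_opNorm_le_of_le hκ₁ hv₁)
        · exact A₂.le_of_opNorm_le_of_le hA₂ ((I₁ - I₂).le_of_opNorm_le_of_le hI hv₁)
        · exact A₂.le_of_opNorm_le_of_le hA₂ (I₂.le_of_opNorm_le_of_le hκ₂ le_rfl)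
    _ = _ := by ring

end Operators

section Bilevel

variable {X Y : Type*} [NormedAddCommGroup X] [NormedSpace ℝ X]
  [NormedAddCommGroup Y] [InnerProductSpace ℝ Y] [FiniteDimensional ℝ Y] {g : X × Y → ℝ}

theorem grady_eq_toDual_symm (hg : Differentiable ℝ g) (p : X × Y) :
    grady g p.1 p.2 = (toDual ℝ Y).symm ((fderiv ℝ g p).comp (ContinuousLinearMap.inr ℝ X Y)) := by
  have h : HasFDerivAt (fun y' => g (p.1, y')) ((fderiv ℝ g p).comp (ContinuousLinearMap.inr ℝ X Y))
      p.2 := (hg p).hasFDerivAt.comp p.2 (hasFDerivAt_prodMk_right p.1 p.2)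
  rw [grady, gradient, h.fderiv]

theorem contDiff_grady (hg : ContDiff ℝ 2 g) :
    ContDiff ℝ 1 fun p : X × Y => grady g p.1 p.2 := by
  simp_rw [grady_eq_toDual_symm (hg.differentiable (by norm_num))]
  exact (toDual ℝ Y).symm.contDiff.comp ((hg.fderiv_right le_rfl).clm_comp contDiff_const)

theorem hasFDerivAt_grady_right (hg : ContDiff ℝ 2 g) (x : X) (y : Y) :
    HasFDerivAt (grady g x ·) (hessyy g x y) y :=
  (((contDiff_grady hg).differentiable one_ne_zero (x, y)).comp y
    ((differentiableAt_const x).prodMk differentiableAt_id)).hasFDerivAt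

theorem norm_grady_sub_grady_le (hg : ContDiff ℝ 2 g) {C : ℝ}
    (hC : ∀ x y, ‖fderiv ℝ (grady g · y) x‖ ≤ C) (y : Y) (a b : X) :
    ‖grady g a y - grady g b y‖ ≤ C * ‖a - b‖ := by
  have hdiff (x : X) : DifferentiableAt ℝ (grady g · y) x :=
    DifferentiableAt.comp (g := fun p : X × Y => grady g p.1 p.2) (f := (·, y)) x
      ((contDiff_grady hg).differentiable one_ne_zero (x, y))
      (differentiableAt_id.prodMk (differentiableAt_const y))
  exact convex_univ.norm_image_sub_le_of_norm_fderiv_le (fun x _ => hdiff x)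
    (fun x _ => hC x y) (mem_univ b) (mem_univ a)

theorem inner_grady_sub_grady_ge (hg : Differentiable ℝ g) {μ : ℝ} (x : X)
    (hsc : ConvexOn ℝ univ fun y : Y => g (x, y) - μ / 2 * ‖y‖ ^ 2) (y z : Y) :
    μ * ‖z - y‖ ^ 2 ≤ ⟪grady g x z - grady g x y, z - y⟫ :=
  (strongConvexOn_iff_convex.mpr hsc).inner_gradient_sub_gradient_ge (fun w =>
    ((hg (x, w)).comp w ((differentiableAt_const x).prodMk differentiableAt_id)).hasGradientAt) y z

theorem mul_norm_le_norm_hessyy_apply (hg : ContDiff ℝ 2 g) {μ : ℝ}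
    (hsc : ∀ x, ConvexOn ℝ univ fun y : Y => g (x, y) - μ / 2 * ‖y‖ ^ 2) (x : X) (y v : Y) :
    μ * ‖v‖ ≤ ‖hessyy g x y v‖ :=
  mul_norm_le_of_mul_sq_le_inner <| (hasFDerivAt_grady_right hg x y).mul_sq_le_inner_apply
    (fun z => inner_grady_sub_grady_ge (hg.differentiable (by norm_num)) x (hsc x) y z) v

theorem norm_argmin_sub_argmin_le (hg : ContDiff ℝ 2 g) {μ C : ℝ} (hμ : 0 < μ)
    (hsc : ∀ x, ConvexOn ℝ univ fun y : Y => g (x, y) - μ / 2 * ‖y‖ ^ 2)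
    (hC : ∀ x y, ‖fderiv ℝ (grady g · y) x‖ ≤ C) {s : X → Y} (hs : ∀ x y, g (x, s x) ≤ g (x, y))
    (a b : X) : ‖s a - s b‖ ≤ C / μ * ‖a - b‖ := by
  have hs₀ (x : X) : grady g x (s x) = 0 :=
    IsLocalMin.gradient_eq_zero (Eventually.of_forall (hs x))
  have h : μ * ‖s a - s b‖ ≤ C * ‖a - b‖ :=
    calc μ * ‖s a - s b‖ ≤ ‖grady g a (s a) - grady g a (s b)‖ :=
          mul_norm_le_of_mul_sq_le_inner (inner_grady_sub_grady_ge
            (hg.differentiable (by norm_num)) a (hsc a) (s b) (s a))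
      _ = ‖grady g a (s b) - grady g b (s b)‖ := by
          rw [hs₀ a, hs₀ b, zero_sub, norm_neg, sub_zero]
      _ ≤ C * ‖a - b‖ := norm_grady_sub_grady_le hg hC (s b) a b
  rw [div_mul_eq_mul_div, le_div_iff₀ hμ]
  linarith

end Bilevel

theorem norm_barGrad_sub_barGrad_le {f g : E × F → ℝ} {Lfx Lfy Cfy μ Lgxy Lgyy Cgxy : ℝ}
    (hfx : ∀ p q : E × F, ‖gradx f p.1 p.2 - gradx f q.1 q.2‖ ≤ Lfx * ‖p - q‖)
    (hfy : ∀ p q : E × F, ‖grady f p.1 p.2 - grady f q.1 q.2‖ ≤ Lfy * ‖p - q‖)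
    (hfyb : ∀ x y, ‖grady f x y‖ ≤ Cfy) (hg : ContDiff ℝ 2 g) (hμ : 0 < μ)
    (hsc : ∀ x : E, ConvexOn ℝ univ fun y : F => g (x, y) - μ / 2 * ‖y‖ ^ 2)
    (hgxy : ∀ p q : E × F, ‖hessxy g p.1 p.2 - hessxy g q.1 q.2‖ ≤ Lgxy * ‖p - q‖)
    (hgyy : ∀ p q : E × F, ‖hessyy g p.1 p.2 - hessyy g q.1 q.2‖ ≤ Lgyy * ‖p - q‖)
    (hgxyb : ∀ x y, ‖hessxy g x y‖ ≤ Cgxy) (p q : E × F) :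
    ‖barGrad f g p.1 p.2 - barGrad f g q.1 q.2‖ ≤
      (Lfx + Lfy * Cgxy / μ + Cfy * (Lgxy / μ + Lgyy * Cgxy / μ ^ 2)) * ‖p - q‖ := by
  have hlow := mul_norm_le_norm_hessyy_apply hg hsc
  have hunit (x : E) (y : F) : IsUnit (hessyy g x y) :=
    ContinuousLinearMap.isUnit_of_mul_norm_le hμ (hlow x y)
  have hinv (x : E) (y : F) : ‖Ring.inverse (hessyy g x y)‖ ≤ μ⁻¹ :=
    ContinuousLinearMap.norm_inverse_le_of_mul_norm_le (hunit x y) hμ (hlow x y)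
  have hCfy : 0 ≤ Cfy := (norm_nonneg _).trans (hfyb p.1 p.2)
  have hCgxy : 0 ≤ Cgxy := (norm_nonneg _).trans (hgxyb p.1 p.2)
  calc ‖barGrad f g p.1 p.2 - barGrad f g q.1 q.2‖
      ≤ ‖gradx f p.1 p.2 - gradx f q.1 q.2‖ + μ⁻¹ * Cfy * ‖hessxy g p.1 p.2 - hessxy g q.1 q.2‖ +
          Cgxy * μ⁻¹ ^ 2 * Cfy * ‖hessyy g p.1 p.2 - hessyy g q.1 q.2‖ +
          Cgxy * μ⁻¹ * ‖grady f p.1 p.2 - grady f q.1 q.2‖ :=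
        norm_sub_apply_inverse_sub_sub_apply_inverse_le (hunit _ _) (hunit _ _) (hinv _ _)
          (hinv _ _) (hgxyb _ _) (hfyb _ _)
    _ ≤ Lfx * ‖p - q‖ + μ⁻¹ * Cfy * (Lgxy * ‖p - q‖) + Cgxy * μ⁻¹ ^ 2 * Cfy * (Lgyy * ‖p - q‖) +
          Cgxy * μ⁻¹ * (Lfy * ‖p - q‖) := by
        gcongr
        exacts [hfx p q, hgxy p q, hgyy p q, hfy p q]
    _ = _ := by field_simp; ring

theorem hypergradient_lipschitz_general
    (f g : E × F → ℝ) (ystar : E → F)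
    (Lfx Lfy Cfy μg Lgxy Lgyy Cgxy Lf Ll : ℝ)
    (hfx : ∀ p q : E × F, ‖gradx f p.1 p.2 - gradx f q.1 q.2‖ ≤ Lfx * ‖p - q‖)
    (hfy : ∀ p q : E × F, ‖grady f p.1 p.2 - grady f q.1 q.2‖ ≤ Lfy * ‖p - q‖)
    (hfyb : ∀ x y, ‖grady f x y‖ ≤ Cfy)
    (hg : ContDiff ℝ 2 g)
    (hμ : 0 < μg)
    (hsc : ∀ x : E, ConvexOn ℝ Set.univ (fun y : F => g (x, y) - μg / 2 * ‖y‖ ^ 2))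
    (hgxy : ∀ p q : E × F, ‖hessxy g p.1 p.2 - hessxy g q.1 q.2‖ ≤ Lgxy * ‖p - q‖)
    (hgyy : ∀ p q : E × F, ‖hessyy g p.1 p.2 - hessyy g q.1 q.2‖ ≤ Lgyy * ‖p - q‖)
    (hgxyb : ∀ x y, ‖hessxy g x y‖ ≤ Cgxy)
    (hmin : ∀ x y, g (x, ystar x) ≤ g (x, y))
    (hLf : Lf = Lfx + Lfy * Cgxy / μg + Cfy * (Lgxy / μg + Lgyy * Cgxy / μg ^ 2))
    (hLl : Ll = Lf + Lf * Cgxy / μg) :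
    ∀ x₁ x₂ : E,
      ‖barGrad f g x₁ (ystar x₁) - barGrad f g x₂ (ystar x₂)‖ ≤ Ll * ‖x₁ - x₂‖ := by
  intro x₁ x₂
  rcases eq_or_ne x₁ x₂ with rfl | hne
  · simp
  set d := ‖(x₁, ystar x₁) - (x₂, ystar x₂)‖
  have hCgxy : 0 ≤ Cgxy := (norm_nonneg _).trans (hgxyb x₁ (ystar x₁))
  have hfderiv (x : E) (y : F) : ‖fderiv ℝ (grady g · y) x‖ ≤ Cgxy := by
    simpa [hessxy] using hgxyb x y
  have hd : d ≤ (1 + Cgxy / μg) * ‖x₁ - x₂‖ := by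
    refine norm_prod_le_iff.mpr ⟨le_mul_of_one_le_left (norm_nonneg _) ?_, ?_⟩
    · exact le_add_of_nonneg_right (div_nonneg hCgxy hμ.le)
    · show ‖ystar x₁ - ystar x₂‖ ≤ _
      linarith [norm_argmin_sub_argmin_le hg hμ hsc hfderiv hmin x₁ x₂, norm_nonneg (x₁ - x₂)]
  have hbar : ‖barGrad f g x₁ (ystar x₁) - barGrad f g x₂ (ystar x₂)‖ ≤ Lf * d :=
    hLf ▸ norm_barGrad_sub_barGrad_le hfx hfy hfyb hg hμ hsc hgxy hgyy hgxyb
      (x₁, ystar x₁) (x₂, ystar x₂)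
  have hd₀ : 0 < d := (norm_pos_iff.mpr (sub_ne_zero.mpr hne)).trans_le
    (norm_fst_le ((x₁, ystar x₁) - (x₂, ystar x₂)))
  have hLf₀ : 0 ≤ Lf := nonneg_of_mul_nonneg_left ((norm_nonneg _).trans hbar) hd₀
  calc _ ≤ Lf * d := hbar
    _ ≤ Lf * ((1 + Cgxy / μg) * ‖x₁ - x₂‖) := by gcongr
    _ = Ll * ‖x₁ - x₂‖ := by rw [hLl]; ring

/-- Lemma 1 (third claim): the hypergradient `x ↦ ∇̄f(x, y*(x)) = ∇l(x)` is
`L_l = L_f + L_f C_{gxy}/μ_g`-Lipschitz. -/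
theorem hypergradient_lipschitz
    (f g : E × F → ℝ) (ystar : E → F)
    (Lfx Lfy Cfy Lg μg Lgxy Lgyy Cgxy Lf Ll : ℝ)
    (hf : ContDiff ℝ 1 f)
    (hfx : ∀ p q : E × F, ‖gradx f p.1 p.2 - gradx f q.1 q.2‖ ≤ Lfx * ‖p - q‖)
    (hfy : ∀ p q : E × F, ‖grady f p.1 p.2 - grady f q.1 q.2‖ ≤ Lfy * ‖p - q‖)
    (hfyb : ∀ x y, ‖grady f x y‖ ≤ Cfy)
    (hg : ContDiff ℝ 2 g)
    (hgy : ∀ p q : E × F, ‖grady g p.1 p.2 - grady g q.1 q.2‖ ≤ Lg * ‖p - q‖)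
    (hμ : 0 < μg)
    (hsc : ∀ x : E, ConvexOn ℝ Set.univ (fun y : F => g (x, y) - μg / 2 * ‖y‖ ^ 2))
    (hgxy : ∀ p q : E × F, ‖hessxy g p.1 p.2 - hessxy g q.1 q.2‖ ≤ Lgxy * ‖p - q‖)
    (hgyy : ∀ p q : E × F, ‖hessyy g p.1 p.2 - hessyy g q.1 q.2‖ ≤ Lgyy * ‖p - q‖)
    (hgxyb : ∀ x y, ‖hessxy g x y‖ ≤ Cgxy)
    (hmin : ∀ x y, g (x, ystar x) ≤ g (x, y))
    (huniq : ∀ x y, (∀ z, g (x, y) ≤ g (x, z)) → y = ystar x)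
    (hLf : Lf = Lfx + Lfy * Cgxy / μg + Cfy * (Lgxy / μg + Lgyy * Cgxy / μg ^ 2))
    (hLl : Ll = Lf + Lf * Cgxy / μg) :
    ∀ x₁ x₂ : E,
      ‖barGrad f g x₁ (ystar x₁) - barGrad f g x₂ (ystar x₂)‖ ≤ Ll * ‖x₁ - x₂‖ :=
  hypergradient_lipschitz_general f g ystar Lfx Lfy Cfy μg Lgxy Lgyy Cgxy Lf Ll hfx hfy hfyb hg hμ
    hsc hgxy hgyy hgxyb hmin hLf hLl
end
end

section
/- Let (Ω, 𝒜, P) be a probability space and, for i = 1,…,m, let h_i : E × F → E and Ĝ_i : E × F × Ω → E be such that for every (x, y) the map ω ↦ Ĝ_i(x, y, ω) is square-integrable with ∫ Ĝ_i(x, y, ω) dP(ω) = h_i(x, y), ∫ ‖Ĝ_i(x, y, ω) − h_i(x, y)‖² dP(ω) ≤ σ_f², and ∫ ‖Ĝ_i(x₁, y₁, ω) − Ĝ_i(x₂, y₂, ω)‖² dP(ω) ≤ 2 L_K² (‖x₁ − x₂‖² + ‖y₁ − y₂‖²) for all points. Let M be a doubly stochastic real m × m matrix satisfying, for some 0 ≤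 λ ≤ 1, the mixing property ∑_i ‖∑_j M_{ij} • v_j‖² ≤ λ² ∑_i ‖v_i‖² for all v with ∑_i v_i = 0. Fix x_i, p_i, u_i ∈ E and y_i, w_i, e^g_i ∈ F, η ∈ [0,1], α, β ≥ 0; set x̄ := (1/m)∑_i x_i, ū := (1/m)∑_i u_i, e_i := p_i − h_i(x_i, y_i), x⁺_i := ∑_j M_{ij} • x_j − α u_i, y⁺_i := y_i − β(w_i + e^g_i), and p⁺_i(ω) := Ĝ_i(x⁺_i, y⁺_i, ω) + (1 − η)(p_i − Ĝ_i(x_i, y_i, ω)). Then ∫ ∑_{i=1}^m ‖p⁺_i(ω) − p_i‖² dP(ω) ≤ 3η² ∑_i ‖e_i‖² + 3η² m σ_f² + 24 L_K² m α² ‖ū‖² + 48 L_K² ∑_i ‖x_i − x̄‖² + 24 L_K² α² ∑_i ‖u_i − ū‖² + 12 L_K² β² ∑_i ‖w_i‖² + 12 L_K² β² ∑_i ‖e^g_i‖². -/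
open Finset MeasureTheory

/-!
Per agent, the new estimate moves from `pᵢ` by `(Ĝᵢ(x⁺ᵢ, y⁺ᵢ) - Ĝᵢ(xᵢ, yᵢ)) + η (Ĝᵢ(xᵢ, yᵢ) - hᵢ) - η eᵢ`,
so `‖a + b + c‖² ≤ 3(‖a‖² + ‖b‖² + ‖c‖²)`, the mean-square Lipschitz bound and the variance bound
control its second moment by `6 L_K² (‖x⁺ᵢ - xᵢ‖² + ‖y⁺ᵢ - yᵢ‖²) + 3η²σ_f² + 3η²‖eᵢ‖²`.
The consensus step is split as `x⁺ᵢ - xᵢ = ∑ⱼ Mᵢⱼ (xⱼ - x̄) - (xᵢ - x̄) - α (uᵢ - ū) - α ū`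
(the rows of `M` sum to one), and the mixing property with `λ ≤ 1` applies to the centred
vectors `xⱼ - x̄`, which sum to zero.
-/

theorem norm_sum_sq_le_card_mul_sum_norm_sq {ι E : Type*} [SeminormedAddCommGroup E]
    (s : Finset ι) (f : ι → E) : ‖∑ i ∈ s, f i‖ ^ 2 ≤ #s * ∑ i ∈ s, ‖f i‖ ^ 2 :=
  (pow_le_pow_left₀ (norm_nonneg _) (norm_sum_le s f) 2).trans sq_sum_le_card_mul_sum_sq

theorem norm_add_sq_le_two_mul {E : Type*} [SeminormedAddCommGroup E] (a b : E) :
    ‖a + b‖ ^ 2 ≤ 2 * (‖a‖ ^ 2 + ‖b‖ ^ 2) := by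
  simpa using norm_sum_sq_le_card_mul_sum_norm_sq univ ![a, b]

theorem norm_add_add_sq_le {E : Type*} [SeminormedAddCommGroup E] (a b c : E) :
    ‖a + b + c‖ ^ 2 ≤ 3 * (‖a‖ ^ 2 + ‖b‖ ^ 2 + ‖c‖ ^ 2) := by
  simpa [Fin.sum_univ_three, add_assoc] using norm_sum_sq_le_card_mul_sum_norm_sq univ ![a, b, c]

theorem norm_add_add_add_sq_le {E : Type*} [SeminormedAddCommGroup E] (a b c d : E) :
    ‖a + b + c + d‖ ^ 2 ≤ 4 * (‖a‖ ^ 2 + ‖b‖ ^ 2 + ‖c‖ ^ 2 + ‖d‖ ^ 2) := by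
  simpa [Fin.sum_univ_four, add_assoc] using
    norm_sum_sq_le_card_mul_sum_norm_sq univ ![a, b, c, d]

section Consensus

variable {ι E : Type*} [Fintype ι] [SeminormedAddCommGroup E] [NormedSpace ℝ E]

theorem sum_sub_average_eq_zero (x : ι → E) :
    ∑ i, (x i - (1 / (Fintype.card ι : ℝ)) • ∑ j, x j) = 0 := by
  rcases isEmpty_or_nonempty ι with hι | hι
  · simp
  rw [sum_sub_distrib, sum_const, card_univ, ← Nat.cast_smul_eq_nsmul ℝ, smul_smul,
    mul_one_div_cancel (by positivity), one_smul, sub_self]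

theorem sum_norm_sq_mix_le_sum_norm_sq {M : Matrix ι ι ℝ} {lam : ℝ} (hlam0 : 0 ≤ lam)
    (hlam1 : lam ≤ 1)
    (hmix : ∀ v : ι → E, ∑ i, v i = 0 → ∑ i, ‖∑ j, M i j • v j‖ ^ 2 ≤ lam ^ 2 * ∑ i, ‖v i‖ ^ 2)
    {v : ι → E} (hv : ∑ i, v i = 0) : ∑ i, ‖∑ j, M i j • v j‖ ^ 2 ≤ ∑ i, ‖v i‖ ^ 2 :=
  (hmix v hv).trans <| mul_le_of_le_one_left (sum_nonneg fun _ _ => sq_nonneg _)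
    (pow_le_one₀ hlam0 hlam1)

theorem sum_norm_sq_mix_step_sub_le {M : Matrix ι ι ℝ} (hrow : ∀ i, ∑ j, M i j = 1)
    (hM : ∀ v : ι → E, ∑ i, v i = 0 → ∑ i, ‖∑ j, M i j • v j‖ ^ 2 ≤ ∑ i, ‖v i‖ ^ 2)
    {x : ι → E} {c : E} (hc : ∑ i, (x i - c) = 0) (u : ι → E) (d : E) (α : ℝ) :
    ∑ i, ‖(∑ j, M i j • x j - α • u i) - x i‖ ^ 2 ≤
      4 * Fintype.card ι * α ^ 2 * ‖d‖ ^ 2 + 8 * ∑ i, ‖x i - c‖ ^ 2 +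
        4 * α ^ 2 * ∑ i, ‖u i - d‖ ^ 2 := by
  have hsplit : ∀ i, (∑ j, M i j • x j - α • u i) - x i =
      ∑ j, M i j • (x j - c) + -(x i - c) + -(α • (u i - d)) + -(α • d) := by
    intro i
    simp only [smul_sub, sum_sub_distrib, ← sum_smul, hrow i, one_smul]
    module
  have hpoint : ∀ i, ‖(∑ j, M i j • x j - α • u i) - x i‖ ^ 2 ≤
      4 * (‖∑ j, M i j • (x j - c)‖ ^ 2 + ‖x i - c‖ ^ 2 + α ^ 2 * ‖u i - d‖ ^ 2 +
        α ^ 2 * ‖d‖ ^ 2) := by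
    intro i
    simpa only [hsplit, norm_neg, norm_smul, mul_pow, Real.norm_eq_abs, sq_abs] using
      norm_add_add_add_sq_le (∑ j, M i j • (x j - c)) (-(x i - c)) (-(α • (u i - d))) (-(α • d))
  calc ∑ i, ‖(∑ j, M i j • x j - α • u i) - x i‖ ^ 2
      ≤ 4 * (∑ i, ‖∑ j, M i j • (x j - c)‖ ^ 2 + ∑ i, ‖x i - c‖ ^ 2 +
          α ^ 2 * ∑ i, ‖u i - d‖ ^ 2 + α ^ 2 * (Fintype.card ι * ‖d‖ ^ 2)) := by
        refine (sum_le_sum fun i _ => hpoint i).trans_eq ?_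
        simp only [← mul_sum, sum_add_distrib, sum_const, card_univ, nsmul_eq_mul]
    _ ≤ _ := by linarith [hM _ hc]

theorem sum_norm_sq_gradient_step_sub_le (y w e : ι → E) (β : ℝ) :
    ∑ i, ‖(y i - β • (w i + e i)) - y i‖ ^ 2 ≤
      2 * β ^ 2 * ∑ i, ‖w i‖ ^ 2 + 2 * β ^ 2 * ∑ i, ‖e i‖ ^ 2 := by
  have hpoint : ∀ i, ‖(y i - β • (w i + e i)) - y i‖ ^ 2 ≤
      2 * β ^ 2 * ‖w i‖ ^ 2 + 2 * β ^ 2 * ‖e i‖ ^ 2 := by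
    intro i
    rw [sub_sub_cancel_left, norm_neg, norm_smul, mul_pow, Real.norm_eq_abs, sq_abs]
    nlinarith [norm_add_sq_le_two_mul (w i) (e i), sq_nonneg β]
  refine (sum_le_sum fun i _ => hpoint i).trans_eq ?_
  simp only [sum_add_distrib, ← mul_sum]

end Consensus

section Momentum

variable {Ω E : Type*} [MeasurableSpace Ω] {P : Measure Ω} [IsProbabilityMeasure P]
  [NormedAddCommGroup E] [NormedSpace ℝ E]

theorem integrable_norm_sq_momentum_step_sub {g₁ g₀ : Ω → E} (h₁ : MemLp g₁ 2 P)
    (h₀ : MemLp g₀ 2 P) (p : E) (η : ℝ) :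
    Integrable (fun ω => ‖g₁ ω + (1 - η) • (p - g₀ ω) - p‖ ^ 2) P :=
  ((h₁.add (((memLp_const p).sub h₀).const_smul (1 - η))).sub (memLp_const p)).norm.integrable_sq

theorem integral_norm_sq_momentum_step_sub_le {g₁ g₀ : Ω → E} (h₁ : MemLp g₁ 2 P)
    (h₀ : MemLp g₀ 2 P) (c p : E) (η : ℝ) :
    ∫ ω, ‖g₁ ω + (1 - η) • (p - g₀ ω) - p‖ ^ 2 ∂P ≤
      3 * ∫ ω, ‖g₁ ω - g₀ ω‖ ^ 2 ∂P + 3 * η ^ 2 * ∫ ω, ‖g₀ ω - c‖ ^ 2 ∂P +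
        3 * η ^ 2 * ‖p - c‖ ^ 2 := by
  have hdiff : Integrable (fun ω => ‖g₁ ω - g₀ ω‖ ^ 2) P := (h₁.sub h₀).norm.integrable_sq
  have hnoise : Integrable (fun ω => ‖g₀ ω - c‖ ^ 2) P :=
    (h₀.sub (memLp_const c)).norm.integrable_sq
  have hpoint : ∀ ω, ‖g₁ ω + (1 - η) • (p - g₀ ω) - p‖ ^ 2 ≤
      3 * ‖g₁ ω - g₀ ω‖ ^ 2 + 3 * η ^ 2 * ‖g₀ ω - c‖ ^ 2 + 3 * η ^ 2 * ‖p - c‖ ^ 2 := by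
    intro ω
    have hsplit : g₁ ω + (1 - η) • (p - g₀ ω) - p =
        (g₁ ω - g₀ ω) + η • (g₀ ω - c) + η • (c - p) := by module
    have := norm_add_add_sq_le (g₁ ω - g₀ ω) (η • (g₀ ω - c)) (η • (c - p))
    rw [norm_smul, norm_smul, mul_pow, mul_pow, Real.norm_eq_abs, sq_abs, norm_sub_rev c] at this
    rw [hsplit]
    linarith
  have hbound : Integrable
      (fun ω => 3 * ‖g₁ ω - g₀ ω‖ ^ 2 + 3 * η ^ 2 * ‖g₀ ω - c‖ ^ 2) P :=
    (hdiff.const_mul _).add (hnoise.const_mul _)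
  calc ∫ ω, ‖g₁ ω + (1 - η) • (p - g₀ ω) - p‖ ^ 2 ∂P
      ≤ ∫ ω, (3 * ‖g₁ ω - g₀ ω‖ ^ 2 + 3 * η ^ 2 * ‖g₀ ω - c‖ ^ 2 + 3 * η ^ 2 * ‖p - c‖ ^ 2) ∂P :=
        integral_mono (integrable_norm_sq_momentum_step_sub h₁ h₀ p η)
          (hbound.add (integrable_const _)) hpoint
    _ = _ := by
        rw [integral_add hbound (integrable_const _),
          integral_add (hdiff.const_mul _) (hnoise.const_mul _), integral_const_mul,
          integral_const_mul, integral_const, probReal_univ, one_smul]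

end Momentum

theorem momentum_estimate_movement_bound_general
    {E F Ω : Type*} [NormedAddCommGroup E] [InnerProductSpace ℝ E]
    [NormedAddCommGroup F] [InnerProductSpace ℝ F]
    [MeasurableSpace Ω] (P : Measure Ω) [IsProbabilityMeasure P]
    (m : ℕ)
    (h : Fin m → E → F → E) (G : Fin m → E → F → Ω → E) (σf LK : ℝ)
    (hL2 : ∀ (i : Fin m) (x : E) (y : F), MemLp (fun ω => G i x y ω) 2 P)
    (hvar : ∀ (i : Fin m) (x : E) (y : F), ∫ ω, ‖G i x y ω - h i x y‖ ^ 2 ∂P ≤ σf ^ 2)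
    (hlip : ∀ (i : Fin m) (x₁ x₂ : E) (y₁ y₂ : F),
      ∫ ω, ‖G i x₁ y₁ ω - G i x₂ y₂ ω‖ ^ 2 ∂P ≤
        2 * LK ^ 2 * (‖x₁ - x₂‖ ^ 2 + ‖y₁ - y₂‖ ^ 2))
    (M : Matrix (Fin m) (Fin m) ℝ)
    (hrow : ∀ i, ∑ j, M i j = 1)
    (lam : ℝ) (hlam0 : 0 ≤ lam) (hlam1 : lam ≤ 1)
    (hmix : ∀ v : Fin m → E, (∑ i, v i) = 0 →
      ∑ i, ‖∑ j, M i j • v j‖ ^ 2 ≤ lam ^ 2 * ∑ i, ‖v i‖ ^ 2)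
    (x p u : Fin m → E) (y w eg : Fin m → F)
    (η α β : ℝ)
    (xbar ubar : E)
    (hxbar : xbar = (1 / (m : ℝ)) • ∑ i, x i)
    (e : Fin m → E) (he : ∀ i, e i = p i - h i (x i) (y i))
    (xplus : Fin m → E) (hxplus : ∀ i, xplus i = (∑ j, M i j • x j) - α • u i)
    (yplus : Fin m → F) (hyplus : ∀ i, yplus i = y i - β • (w i + eg i))
    (pplus : Fin m → Ω → E)
    (hpplus : ∀ i ω,
      pplus i ω = G i (xplus i) (yplus i) ω + (1 - η) • (p i - G i (x i) (y i) ω)) :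
    ∫ ω, ∑ i, ‖pplus i ω - p i‖ ^ 2 ∂P ≤
      3 * η ^ 2 * ∑ i, ‖e i‖ ^ 2 + 3 * η ^ 2 * (m : ℝ) * σf ^ 2 +
        24 * LK ^ 2 * (m : ℝ) * α ^ 2 * ‖ubar‖ ^ 2 +
        48 * LK ^ 2 * ∑ i, ‖x i - xbar‖ ^ 2 +
        24 * LK ^ 2 * α ^ 2 * ∑ i, ‖u i - ubar‖ ^ 2 +
        12 * LK ^ 2 * β ^ 2 * ∑ i, ‖w i‖ ^ 2 +
        12 * LK ^ 2 * β ^ 2 * ∑ i, ‖eg i‖ ^ 2 := by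
  have hagent : ∀ i, ∫ ω, ‖pplus i ω - p i‖ ^ 2 ∂P ≤
      6 * LK ^ 2 * (‖xplus i - x i‖ ^ 2 + ‖yplus i - y i‖ ^ 2) + 3 * η ^ 2 * σf ^ 2 +
        3 * η ^ 2 * ‖e i‖ ^ 2 := fun i => by
    simp only [hpplus, he]
    linarith [integral_norm_sq_momentum_step_sub_le (hL2 i (xplus i) (yplus i))
      (hL2 i (x i) (y i)) (h i (x i) (y i)) (p i) η, hlip i (xplus i) (x i) (yplus i) (y i),
      mul_le_mul_of_nonneg_left (hvar i (x i) (y i)) (sq_nonneg η)]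
  have hx : ∑ i, ‖xplus i - x i‖ ^ 2 ≤ 4 * m * α ^ 2 * ‖ubar‖ ^ 2 +
      8 * ∑ i, ‖x i - xbar‖ ^ 2 + 4 * α ^ 2 * ∑ i, ‖u i - ubar‖ ^ 2 := by
    have hcentred : ∑ i, (x i - xbar) = 0 := by
      simpa only [hxbar, Fintype.card_fin] using sum_sub_average_eq_zero x
    simpa only [hxplus, Fintype.card_fin] using sum_norm_sq_mix_step_sub_le hrow
      (fun v hv => sum_norm_sq_mix_le_sum_norm_sq hlam0 hlam1 hmix hv) hcentred u ubar α
  have hy : ∑ i, ‖yplus i - y i‖ ^ 2 ≤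
      2 * β ^ 2 * ∑ i, ‖w i‖ ^ 2 + 2 * β ^ 2 * ∑ i, ‖eg i‖ ^ 2 := by
    simpa only [hyplus] using sum_norm_sq_gradient_step_sub_le y w eg β
  have hint : ∀ i, Integrable (fun ω => ‖pplus i ω - p i‖ ^ 2) P := fun i => by
    simpa only [hpplus] using integrable_norm_sq_momentum_step_sub (hL2 i (xplus i) (yplus i))
      (hL2 i (x i) (y i)) (p i) η
  rw [integral_finsetSum _ fun i _ => hint i]
  refine (sum_le_sum fun i _ => hagent i).trans ?_
  simp only [sum_add_distrib, ← mul_sum, mul_add, sum_const, card_univ, Fintype.card_fin,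
    nsmul_eq_mul]
  linarith [mul_le_mul_of_nonneg_left hx (sq_nonneg LK),
    mul_le_mul_of_nonneg_left hy (sq_nonneg LK)]

/-- Lemma 9 (fourth claim): expected total squared movement of the momentum-based gradient
estimates `pᵢ` over one step of the DIAMOND algorithm. -/
theorem momentum_estimate_movement_bound
    {E F Ω : Type*} [NormedAddCommGroup E] [InnerProductSpace ℝ E] [FiniteDimensional ℝ E]
    [NormedAddCommGroup F] [InnerProductSpace ℝ F] [FiniteDimensional ℝ F]
    [MeasurableSpace Ω] (P : Measure Ω) [IsProbabilityMeasure P]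
    (m : ℕ) (hm : 0 < m)
    (h : Fin m → E → F → E) (G : Fin m → E → F → Ω → E) (σf LK : ℝ)
    (hL2 : ∀ (i : Fin m) (x : E) (y : F), MemLp (fun ω => G i x y ω) 2 P)
    (hmean : ∀ (i : Fin m) (x : E) (y : F), ∫ ω, G i x y ω ∂P = h i x y)
    (hvar : ∀ (i : Fin m) (x : E) (y : F), ∫ ω, ‖G i x y ω - h i x y‖ ^ 2 ∂P ≤ σf ^ 2)
    (hlip : ∀ (i : Fin m) (x₁ x₂ : E) (y₁ y₂ : F),
      ∫ ω, ‖G i x₁ y₁ ω - G i x₂ y₂ ω‖ ^ 2 ∂P ≤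
        2 * LK ^ 2 * (‖x₁ - x₂‖ ^ 2 + ‖y₁ - y₂‖ ^ 2))
    (M : Matrix (Fin m) (Fin m) ℝ)
    (hrow : ∀ i, ∑ j, M i j = 1) (hcol : ∀ j, ∑ i, M i j = 1)
    (lam : ℝ) (hlam0 : 0 ≤ lam) (hlam1 : lam ≤ 1)
    (hmix : ∀ v : Fin m → E, (∑ i, v i) = 0 →
      ∑ i, ‖∑ j, M i j • v j‖ ^ 2 ≤ lam ^ 2 * ∑ i, ‖v i‖ ^ 2)
    (x p u : Fin m → E) (y w eg : Fin m → F)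
    (η α β : ℝ) (hη0 : 0 ≤ η) (hη1 : η ≤ 1) (hα : 0 ≤ α) (hβ : 0 ≤ β)
    (xbar ubar : E)
    (hxbar : xbar = (1 / (m : ℝ)) • ∑ i, x i)
    (hubar : ubar = (1 / (m : ℝ)) • ∑ i, u i)
    (e : Fin m → E) (he : ∀ i, e i = p i - h i (x i) (y i))
    (xplus : Fin m → E) (hxplus : ∀ i, xplus i = (∑ j, M i j • x j) - α • u i)
    (yplus : Fin m → F) (hyplus : ∀ i, yplus i = y i - β • (w i + eg i))
    (pplus : Fin m → Ω → E)
    (hpplus : ∀ i ω,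
      pplus i ω = G i (xplus i) (yplus i) ω + (1 - η) • (p i - G i (x i) (y i) ω)) :
    ∫ ω, ∑ i, ‖pplus i ω - p i‖ ^ 2 ∂P ≤
      3 * η ^ 2 * ∑ i, ‖e i‖ ^ 2 + 3 * η ^ 2 * (m : ℝ) * σf ^ 2 +
        24 * LK ^ 2 * (m : ℝ) * α ^ 2 * ‖ubar‖ ^ 2 +
        48 * LK ^ 2 * ∑ i, ‖x i - xbar‖ ^ 2 +
        24 * LK ^ 2 * α ^ 2 * ∑ i, ‖u i - ubar‖ ^ 2 +
        12 * LK ^ 2 * β ^ 2 * ∑ i, ‖w i‖ ^ 2 +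
        12 * LK ^ 2 * β ^ 2 * ∑ i, ‖eg i‖ ^ 2 :=
  momentum_estimate_movement_bound_general P m h G σf LK hL2 hvar hlip M hrow lam hlam0 hlam1 hmix x
    p u y w eg η α β xbar ubar hxbar e he xplus hxplus yplus hyplus pplus hpplus
end
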